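/- arXiv:1511.04482 — 2 statements merged into one kernel-verified Lean document; each statement's English description precedes it below -/
import Mathlib

section
/- Let C₃ denote the 3-cycle tournament on {0,1,2} with edges 0→1, 1→2, 2→0, and let C₃×C₃ be the direct product tournament on {0,1,2}×{0,1,2}. There exists a family of 9 coins (c_v)_{v ∈ {0,1,2}×{0,1,2}} such that for all distinct vertices u, v of C₃×C₃, coin c_u dominates coin c_v if and only if u → v holds in C₃×C₃; in particular, C₃×C₃ is the dominance graph of a set of coins. -/
/-!
The nine coins are an explicit rational witness. Dominance is asymmetric and `C₃ × C₃` is a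
tournament, so it suffices to check that `c_u` dominates `c_v` along each of the 36 edges
`u → v`. After clearing the common positive denominator `(1 + x)(1 + x')`, each such check
is a comparison of two rational numbers.
-/

open Finset

/-- The probability that coin `(a,b,x)` displays a strictly larger number than
coin `(a',b',x')`, when both are flipped independently. -/
noncomputable def winProb (a b x a' b' x' : ℝ) : ℝ :=
  (1 / (1 + x)) * (1 / (1 + x')) * (if a' < a then 1 else 0)
  + (1 / (1 + x)) * (x' / (1 + x')) * (if b' < a then 1 else 0)
  + (x / (1 + x)) * (1 / (1 + x')) * (if a' < b then 1 else 0)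
  + (x / (1 + x)) * (x' / (1 + x')) * (if b' < b then 1 else 0)

/-- Coin `(a,b,x)` dominates coin `(a',b',x')`: it is more likely to display the
strictly larger number. -/
def Dominates (a b x a' b' x' : ℝ) : Prop :=
  winProb a' b' x' a b x < winProb a b x a' b' x'

/-- A tournament: irreflexive, and for distinct vertices exactly one of the two
directed edges is present. -/
def IsTournament {V : Type*} (R : V → V → Prop) : Prop :=
  (∀ v, ¬ R v v) ∧ ∀ u v : V, u ≠ v → (R u v ↔ ¬ R v u)

/-- A directed cycle `c 0 → c 1 → ⋯ → c (m-1) → c 0` in the digraph `R`: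
the vertices are distinct and consecutive ones (cyclically) are joined by edges. -/
def IsCycle {V : Type*} (R : V → V → Prop) {m : ℕ} (c : Fin (m + 1) → V) : Prop :=
  Function.Injective c ∧ ∀ i : Fin (m + 1), R (c i) (c (i + 1))

/-- A cycle on linearly ordered vertices is ascending if it has at least as many
ascents as descents. -/
def IsAscendingCycle {α : Type*} [LinearOrder α] {m : ℕ} (c : Fin (m + 1) → α) : Prop :=
  (univ.filter (fun i : Fin (m + 1) => c (i + 1) < c i)).card ≤
    (univ.filter (fun i : Fin (m + 1) => c i < c (i + 1))).card

/-- A digraph on a linearly ordered vertex set is semiacyclic if it contains no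
ascending directed cycle. -/
def Semiacyclic {α : Type*} [LinearOrder α] (R : α → α → Prop) : Prop :=
  ∀ (m : ℕ) (c : Fin (m + 1) → α), IsCycle R c → ¬ IsAscendingCycle c

/-- Lexicographic order on coin types. -/
def TypeLt (a b x a' b' x' : ℝ) : Prop :=
  a < a' ∨ (a = a' ∧ b < b') ∨ (a = a' ∧ b = b' ∧ x < x')

/-- The 3-cycle tournament on `{0,1,2}` with `0 → 1`, `1 → 2`, `2 → 0`. -/
def C3 (u v : Fin 3) : Prop := v = u + 1

/-- The direct product of two tournaments. -/
def TournProd {V₁ V₂ : Type*} (R₁ : V₁ → V₁ → Prop) (R₂ : V₂ → V₂ → Prop)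
    (u v : V₁ × V₂) : Prop :=
  R₁ u.1 v.1 ∨ (u.1 = v.1 ∧ R₂ u.2 v.2)

noncomputable def winWeight (a b x a' b' x' : ℝ) : ℝ :=
  (if a' < a then 1 else 0) + x' * (if b' < a then 1 else 0)
  + x * (if a' < b then 1 else 0) + x * x' * (if b' < b then 1 else 0)

lemma winProb_eq_winWeight_div (a b x a' b' x' : ℝ) (hx : 1 + x ≠ 0) (hx' : 1 + x' ≠ 0) :
    winProb a b x a' b' x' = winWeight a b x a' b' x' / ((1 + x) * (1 + x')) := by
  unfold winProb winWeight
  field_simp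

lemma dominates_iff_winWeight_lt {a b x a' b' x' : ℝ} (hx : 0 < 1 + x) (hx' : 0 < 1 + x') :
    Dominates a b x a' b' x' ↔ winWeight a' b' x' a b x < winWeight a b x a' b' x' := by
  rw [Dominates, winProb_eq_winWeight_div _ _ _ _ _ _ hx.ne' hx'.ne',
    winProb_eq_winWeight_div _ _ _ _ _ _ hx'.ne' hx.ne', mul_comm (1 + x'),
    div_lt_div_iff_of_pos_right (mul_pos hx hx')]

lemma isTournament_C3 : IsTournament C3 := by
  unfold IsTournament C3
  decide

lemma IsTournament.tournProd {V₁ V₂ : Type*} {R₁ : V₁ → V₁ → Prop} {R₂ : V₂ → V₂ → Prop}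
    (h₁ : IsTournament R₁) (h₂ : IsTournament R₂) : IsTournament (TournProd R₁ R₂) := by
  refine ⟨fun v h => h.elim (h₁.1 _) (fun h' => h₂.1 _ h'.2), fun u v huv => ?_⟩
  by_cases h : u.1 = v.1
  · have h2 : u.2 ≠ v.2 := fun h2 => huv (Prod.ext h h2)
    simp only [TournProd, h, h₁.1, h₂.2 _ _ h2, false_or, true_and]
  · simp only [TournProd, h, Ne.symm h, h₁.2 _ _ h, false_and, or_false]

lemma IsTournament.iff_of_forall_imp {V : Type*} {R D : V → V → Prop} (hR : IsTournament R)
    (hD : ∀ u v, D u v → ¬ D v u) (hRD : ∀ u v, R u v → D u v) {u v : V} (huv : u ≠ v) :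
    D u v ↔ R u v := by
  refine ⟨fun h => ?_, hRD u v⟩
  by_contra hn
  exact hD u v h (hRD v u ((hR.2 v u huv.symm).mpr hn))

noncomputable def coinLow (v : Fin 3 × Fin 3) : ℝ :=
  ![![2, 8, 7], ![18, 18, 18], ![12, 10, 16]] v.1 v.2

noncomputable def coinHigh (v : Fin 3 × Fin 3) : ℝ :=
  ![![19, 19, 19], ![24, 36, 28], ![28, 22, 20]] v.1 v.2

noncomputable def coinBias (v : Fin 3 × Fin 3) : ℝ :=
  ![![11/2, 21/5, 24/5], ![1/2, 6/19, 7/18], ![7/10, 19/17, 9/5]] v.1 v.2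

lemma coinLow_le_coinHigh_and_coinBias_pos (v : Fin 3 × Fin 3) :
    coinLow v ≤ coinHigh v ∧ 0 < coinBias v := by
  fin_cases v <;> norm_num [coinLow, coinHigh, coinBias]

lemma coin_dominates_of_tournProd {u v : Fin 3 × Fin 3} (huv : TournProd C3 C3 u v) :
    Dominates (coinLow u) (coinHigh u) (coinBias u) (coinLow v) (coinHigh v) (coinBias v) := by
  rw [dominates_iff_winWeight_lt (by linarith [(coinLow_le_coinHigh_and_coinBias_pos u).2])
    (by linarith [(coinLow_le_coinHigh_and_coinBias_pos v).2])]
  unfold TournProd C3 at huv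
  fin_cases u <;> fin_cases v <;>
    first
    | exact absurd huv (by decide)
    | norm_num [winWeight, coinLow, coinHigh, coinBias]

/-- The tournament `C₃ × C₃` is the dominance graph of a set of nine coins. -/
theorem stmt14 :
    ∃ a b x : Fin 3 × Fin 3 → ℝ,
      (∀ v, a v ≤ b v ∧ 0 < x v) ∧
      ∀ u v : Fin 3 × Fin 3, u ≠ v →
        (Dominates (a u) (b u) (x u) (a v) (b v) (x v) ↔ TournProd C3 C3 u v) :=
  ⟨coinLow, coinHigh, coinBias, coinLow_le_coinHigh_and_coinBias_pos, fun _ _ =>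
    (isTournament_C3.tournProd isTournament_C3).iff_of_forall_imp
      (fun _ _ h => lt_asymm h) (fun _ _ => coin_dominates_of_tournProd)⟩
end

section
/- Let T be a tournament on a finite set V. Suppose there is a family of coins (c_v)_{v∈V} such that for all distinct u, v ∈ V, coin c_u dominates coin c_v if and only if u → v holds in T. Then V can be written as a union V = V₁ ∪ V₂ such that for each k ∈ {1,2}, the subtournament of T induced on V_k can be made semiacyclic, i.e., there is a bijection σ_k : V_k → {1,…,|V_k|} such that the tournament on {1,…,|V_k|} with σ_k(u)→σ_k(v) whenever u→v in T (for u,v ∈ V_k) is semiacyclic. -/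
open Finset

/-! Split the vertices at `x = 1`. Among coins with `x ≤ 1`, a coin never dominates one with a
larger low face `a`, so `a` is constant along every directed cycle; there, numbering the
vertices lexicographically by `(a, b, x)` makes the potential `1 / x` rise by more than `1`
along each ascent and by more than `-1` along each descent. Summing around the cycle gives
`#ascents - #descents < 0`. The coins with `x ≥ 1` reduce to this case by the symmetry
`(a, b, x) ↦ (-b, -a, 1 / x)`, which reverses dominance, combined with reversing the numbering. -/

section Cycles

theorem Fin.sum_comp_add_one {β : Type*} [AddCommMonoid β] {m : ℕ} (f : Fin (m + 1) → β) :
    ∑ i, f (i + 1) = ∑ i, f i :=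
  Equiv.sum_comp (Equiv.addRight 1) f

theorem Fin.add_one_eq_of_cyclic_antitone {β : Type*} [AddCommGroup β] [PartialOrder β]
    [IsOrderedAddMonoid β] {m : ℕ} {f : Fin (m + 1) → β} (hf : ∀ i, f (i + 1) ≤ f i)
    (i : Fin (m + 1)) : f (i + 1) = f i := by
  have hsum : ∑ j, (f j - f (j + 1)) = 0 := by
    rw [sum_sub_distrib, Fin.sum_comp_add_one, sub_self]
  have hi := (sum_eq_zero_iff_of_nonneg fun j _ => sub_nonneg.2 (hf j)).1 hsum i (mem_univ i)
  exact (sub_eq_zero.1 hi).symm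

variable {α : Type*} {S : α → α → Prop} {m : ℕ} {c : Fin (m + 1) → α}

theorem IsCycle.apply_ne_apply_add_one (hirr : ∀ v, ¬ S v v) (hc : IsCycle S c)
    (i : Fin (m + 1)) : c i ≠ c (i + 1) :=
  fun h => hirr _ (h ▸ hc.2 i)

theorem Semiacyclic.of_potential [LinearOrder α] (hirr : ∀ v, ¬ S v v) (ψ : α → ℝ)
    (hψ : ∀ (m : ℕ) (c : Fin (m + 1) → α), IsCycle S c → ∀ i,
      (c i < c (i + 1) → 1 < ψ (c (i + 1)) - ψ (c i)) ∧
        (c (i + 1) < c i → -1 < ψ (c (i + 1)) - ψ (c i))) :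
    Semiacyclic S := by
  intro m c hc hasc
  have hstep : ∀ i,
      (if c i < c (i + 1) then (1 : ℝ) else 0) - (if c (i + 1) < c i then 1 else 0) <
        ψ (c (i + 1)) - ψ (c i) := by
    intro i
    rcases (hc.apply_ne_apply_add_one hirr i).lt_or_gt with h | h
    · rw [if_pos h, if_neg h.not_gt]
      linarith [(hψ m c hc i).1 h]
    · rw [if_neg h.not_gt, if_pos h]
      linarith [(hψ m c hc i).2 h]
  have hsum := sum_lt_sum_of_nonempty univ_nonempty fun i _ => hstep i
  rw [sum_sub_distrib, sum_sub_distrib, Fin.sum_comp_add_one (fun i => ψ (c i)), sub_self,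
    sum_boole, sum_boole, sub_neg] at hsum
  exact hasc.not_gt (by exact_mod_cast hsum)

theorem Semiacyclic.comp_rev {n : ℕ} {S : Fin n → Fin n → Prop} (h : Semiacyclic (flip S)) :
    Semiacyclic fun i j : Fin n => S i.rev j.rev := by
  intro m c hc hasc
  have hidx : ∀ i : Fin (m + 1), -(i + 1) + 1 = -i := fun i => by abel
  refine h m (fun i => Fin.rev (c (-i)))
    ⟨Fin.rev_injective.comp (hc.1.comp neg_injective), fun i => ?_⟩ ?_
  · simpa [flip, hidx] using hc.2 (-(i + 1))
  · have hcount : ∀ (P : Fin n → Fin n → Prop) [DecidableRel P],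
        #{i | P (c (-(i + 1))) (c (-i))} = #{i | P (c i) (c (i + 1))} := by
      intro P _
      have hinv : ∀ i : Fin (m + 1), -(-(i + 1) + 1) = i := fun i => by rw [hidx, neg_neg]
      refine card_nbij' (fun i => -(i + 1)) (fun i => -(i + 1)) (fun i hi => ?_) (fun i hi => ?_)
        (fun i _ => hinv i) (fun i _ => hinv i) <;>
      simpa only [coe_filter, mem_univ, true_and, Set.mem_ofPred_eq, hidx, neg_neg] using hi
    have hdesc := hcount fun u v => v < u
    have hasc' := hcount fun u v => u < v
    beta_reduce at hdesc hasc'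
    simpa only [IsAscendingCycle, Fin.rev_lt_rev, hdesc, hasc'] using hasc

end Cycles

theorem exists_equiv_fin_strictMono {V κ : Type*} [LinearOrder κ] (s : Finset V) (K : V → κ)
    (hK : Set.InjOn K s) : ∃ e : s ≃ Fin s.card, StrictMono fun i => K (e.symm i) := by
  let _ : LinearOrder s :=
    LinearOrder.lift' (fun p => K p) fun p q h => Subtype.ext (hK p.2 q.2 h)
  let o := Fintype.orderIsoFinOfCardEq s (Fintype.card_coe s)
  exact ⟨o.symm.toEquiv, o.strictMono⟩

theorem exists_numbering_semiacyclic_of_potential {V κ : Type*} [LinearOrder κ]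
    {R : V → V → Prop} (hirr : ∀ v, ¬ R v v) (s : Finset V) (K : V → κ) (hK : Set.InjOn K s)
    (ψ : V → ℝ)
    (hψ : ∀ (m : ℕ) (c : Fin (m + 1) → V), (∀ i, c i ∈ s) → IsCycle R c → ∀ i,
      (K (c i) < K (c (i + 1)) → 1 < ψ (c (i + 1)) - ψ (c i)) ∧
        (K (c (i + 1)) < K (c i) → -1 < ψ (c (i + 1)) - ψ (c i))) :
    ∃ e : s ≃ Fin s.card, Semiacyclic fun i j => R (e.symm i) (e.symm j) := by
  obtain ⟨e, he⟩ := exists_equiv_fin_strictMono s K hK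
  refine ⟨e, .of_potential (fun i => hirr _) (fun i => ψ (e.symm i)) fun m c hc i => ?_⟩
  simp only [← he.lt_iff_lt]
  exact hψ m (fun i => e.symm (c i)) (fun i => (e.symm (c i)).2)
    ⟨fun i j h => hc.1 (e.symm.injective (Subtype.ext h)), hc.2⟩ i

section Coins

theorem Real.sign_le_one (r : ℝ) : r.sign ≤ 1 := by
  rcases r.sign_apply_eq with h | h | h <;> rw [h] <;> norm_num

theorem Real.sign_nonpos {r : ℝ} (hr : r ≤ 0) : r.sign ≤ 0 := by
  rcases hr.lt_or_eq with h | rfl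
  · rw [Real.sign_of_neg h]
    norm_num
  · rw [Real.sign_zero]

theorem Real.sign_sub (p q : ℝ) :
    (p - q).sign = (if q < p then 1 else 0) - (if p < q then 1 else 0) := by
  rcases lt_trichotomy p q with h | rfl | h
  · rw [Real.sign_of_neg (sub_neg.2 h), if_neg h.not_gt, if_pos h]
    norm_num
  · simp
  · rw [Real.sign_of_pos (sub_pos.2 h), if_pos h, if_neg h.not_gt]
    norm_num

variable {a b x a' b' x' : ℝ}

theorem dominates_iff_sign (hx : 0 < x) (hx' : 0 < x') :
    Dominates a b x a' b' x' ↔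
      0 < (a - a').sign + x' * (a - b').sign + x * (b - a').sign + x * x' * (b - b').sign := by
  have hdiff : winProb a b x a' b' x' - winProb a' b' x' a b x =
      ((a - a').sign + x' * (a - b').sign + x * (b - a').sign + x * x' * (b - b').sign) /
        ((1 + x) * (1 + x')) := by
    simp only [winProb, Real.sign_sub]
    field_simp
    ring
  rw [Dominates, ← sub_pos, hdiff, div_pos_iff_of_pos_right (by positivity)]

theorem not_dominates_of_lt_of_le_one (hab' : a' ≤ b') (hx : 0 < x) (hx' : 0 < x')
    (hx1 : x ≤ 1) (ha : a < a') : ¬ Dominates a b x a' b' x' := by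
  rw [dominates_iff_sign hx hx', Real.sign_of_neg (sub_neg.2 ha),
    Real.sign_of_neg (by linarith : a - b' < 0), not_lt]
  nlinarith [Real.sign_le_one (b - a'), Real.sign_le_one (b - b'), mul_pos hx hx']

theorem not_dominates_of_degenerate (hab' : a ≤ b') (hx : 0 < x) (hx' : 0 < x') :
    ¬ Dominates a a x a b' x' := by
  rw [dominates_iff_sign hx hx', sub_self, Real.sign_zero, not_lt]
  nlinarith [Real.sign_nonpos (sub_nonpos.2 hab'), mul_pos hx hx']

theorem Dominates.inv_sub_inv_of_eq (hab' : a < b') (hx : 0 < x) (hx' : 0 < x')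
    (hd : Dominates a b x a b' x') :
    (toLex (b, x) < toLex (b', x') → 1 < x'⁻¹ - x⁻¹) ∧
      (toLex (b', x') < toLex (b, x) → -1 < x'⁻¹ - x⁻¹) := by
  rw [dominates_iff_sign hx hx', sub_self, Real.sign_zero, Real.sign_of_neg (sub_neg.2 hab')]
    at hd
  rcases lt_trichotomy b b' with hb | rfl | hb
  · rw [Real.sign_of_neg (sub_neg.2 hb)] at hd
    have hx'x : x' * (1 + x) < x := by nlinarith [Real.sign_le_one (b - a)]
    have hgap : 1 < x'⁻¹ - x⁻¹ := by
      rw [inv_sub_inv hx'.ne' hx.ne', lt_div_iff₀ (by positivity)]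
      linarith
    exact ⟨fun _ => hgap, fun _ => by linarith⟩
  · rw [Real.sign_of_pos (sub_pos.2 hab'), sub_self, Real.sign_zero] at hd
    have hinv : x⁻¹ < x'⁻¹ := inv_strictAnti₀ hx' (by linarith)
    simp only [Prod.Lex.toLex_lt_toLex, lt_irrefl, true_and, false_or]
    exact ⟨fun h => absurd h (by linarith), fun _ => by linarith⟩
  · rw [Real.sign_of_pos (sub_pos.2 (hab'.trans hb)), Real.sign_of_pos (sub_pos.2 hb)] at hd
    have hgap : -1 < x'⁻¹ - x⁻¹ := by
      rw [inv_sub_inv hx'.ne' hx.ne', lt_div_iff₀ (by positivity)]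
      linarith
    exact ⟨fun h => absurd (Prod.Lex.toLex_lt_toLex.1 h) (by simp [hb.not_gt, hb.ne']),
      fun _ => hgap⟩

theorem winProb_neg_inv (hx : 0 < x) (hx' : 0 < x') :
    winProb (-b) (-a) x⁻¹ (-b') (-a') x'⁻¹ = winProb a' b' x' a b x := by
  have h : ∀ y : ℝ, 0 < y → 1 / (1 + y⁻¹) = y / (1 + y) ∧ y⁻¹ / (1 + y⁻¹) = 1 / (1 + y) :=
    fun y hy => by constructor <;> field_simp <;> ring
  simp only [winProb, neg_lt_neg_iff, (h x hx).1, (h x hx).2, (h x' hx').1, (h x' hx').2]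
  ring

theorem dominates_neg_inv_iff (hx : 0 < x) (hx' : 0 < x') :
    Dominates (-b') (-a') x'⁻¹ (-b) (-a) x⁻¹ ↔ Dominates a b x a' b' x' := by
  rw [Dominates, Dominates, winProb_neg_inv hx hx', winProb_neg_inv hx' hx]

end Coins

theorem cycle_inv_sub_inv_of_le_one {m : ℕ} {a b x : Fin (m + 1) → ℝ}
    (hcoin : ∀ i, a i ≤ b i ∧ 0 < x i) (hx1 : ∀ i, x i ≤ 1)
    (hd : ∀ i, Dominates (a i) (b i) (x i) (a (i + 1)) (b (i + 1)) (x (i + 1)))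
    (i : Fin (m + 1)) :
    (toLex (a i, toLex (b i, x i)) < toLex (a (i + 1), toLex (b (i + 1), x (i + 1))) →
        1 < (x (i + 1))⁻¹ - (x i)⁻¹) ∧
      (toLex (a (i + 1), toLex (b (i + 1), x (i + 1))) < toLex (a i, toLex (b i, x i)) →
        -1 < (x (i + 1))⁻¹ - (x i)⁻¹) := by
  have hlevel : ∀ j, a (j + 1) = a j := Fin.add_one_eq_of_cyclic_antitone fun j =>
    not_lt.1 fun h =>
      not_dominates_of_lt_of_le_one (hcoin _).1 (hcoin _).2 (hcoin _).2 (hx1 j) h (hd j)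
  have hnondeg : ∀ j, a j < b j := fun j => (hcoin j).1.lt_of_ne fun h => by
    have hdj := hd j
    rw [← h, hlevel] at hdj
    exact not_dominates_of_degenerate (hlevel j ▸ (hcoin (j + 1)).1) (hcoin _).2 (hcoin _).2 hdj
  have hdi := hd i
  rw [hlevel] at hdi
  simpa only [hlevel, Prod.Lex.toLex_lt_toLex, lt_irrefl, true_and, false_or] using
    hdi.inv_sub_inv_of_eq (hlevel i ▸ hnondeg (i + 1)) (hcoin _).2 (hcoin _).2

section Representation

variable {V : Type*} {R : V → V → Prop} {a b x : V → ℝ}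

theorem IsTournament.flip (htour : IsTournament R) : IsTournament (flip R) :=
  ⟨htour.1, fun u v h => htour.2 v u h.symm⟩

theorem IsTournament.eq_of_coin_eq (htour : IsTournament R)
    (hrep : ∀ u v : V, u ≠ v → (Dominates (a u) (b u) (x u) (a v) (b v) (x v) ↔ R u v))
    {u v : V} (ha : a u = a v) (hb : b u = b v) (hx : x u = x v) : u = v := by
  by_contra hne
  have hnot : ∀ {u v : V}, a u = a v → b u = b v → x u = x v → u ≠ v → ¬ R u v :=
    fun ha hb hx hne h => ((hrep _ _ hne).2 h).ne (by rw [ha, hb, hx])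
  exact hnot ha hb hx hne ((htour.2 u v hne).2 (hnot ha.symm hb.symm hx.symm (Ne.symm hne)))

variable (htour : IsTournament R) (hcoin : ∀ v, a v ≤ b v ∧ 0 < x v)
  (hrep : ∀ u v : V, u ≠ v → (Dominates (a u) (b u) (x u) (a v) (b v) (x v) ↔ R u v))
include htour hcoin hrep

theorem exists_numbering_semiacyclic_of_le_one (s : Finset V) (hs : ∀ v ∈ s, x v ≤ 1) :
    ∃ e : s ≃ Fin s.card, Semiacyclic fun i j => R (e.symm i) (e.symm j) := by
  refine exists_numbering_semiacyclic_of_potential htour.1 s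
    (fun v => toLex (a v, toLex (b v, x v))) ?_ (fun v => (x v)⁻¹) fun m c hcs hc => ?_
  · intro u _ v _ h
    simp only [toLex_inj, Prod.mk.injEq] at h
    exact htour.eq_of_coin_eq hrep h.1 h.2.1 h.2.2
  · exact cycle_inv_sub_inv_of_le_one (fun i => hcoin _) (fun i => hs _ (hcs i))
      fun i => (hrep _ _ (hc.apply_ne_apply_add_one htour.1 i)).2 (hc.2 i)

theorem exists_numbering_semiacyclic_of_one_le (s : Finset V) (hs : ∀ v ∈ s, 1 ≤ x v) :
    ∃ e : s ≃ Fin s.card, Semiacyclic fun i j => R (e.symm i) (e.symm j) := by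
  obtain ⟨e, he⟩ := exists_numbering_semiacyclic_of_le_one (a := fun v => -b v)
    (b := fun v => -a v) (x := fun v => (x v)⁻¹) htour.flip
    (fun v => ⟨neg_le_neg (hcoin v).1, inv_pos.2 (hcoin v).2⟩)
    (fun u v huv => (dominates_neg_inv_iff (hcoin v).2 (hcoin u).2).trans (hrep v u huv.symm))
    s fun v hv => inv_le_one_of_one_le₀ (hs v hv)
  exact ⟨e.trans Fin.revPerm,
    Semiacyclic.comp_rev (S := fun i j => R (e.symm i) (e.symm j)) he⟩

end Representation

/-- If a tournament is the dominance graph of a system of coins, then its vertex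
set is the union of two sets on each of which the induced subtournament can be
numbered so as to become semiacyclic. -/
theorem stmt15 {V : Type*} [Fintype V] (R : V → V → Prop)
    (htour : IsTournament R)
    (a b x : V → ℝ) (hcoin : ∀ v, a v ≤ b v ∧ 0 < x v)
    (hrep : ∀ u v : V, u ≠ v →
      (Dominates (a u) (b u) (x u) (a v) (b v) (x v) ↔ R u v)) :
    ∃ V₁ V₂ : Finset V, (∀ v, v ∈ V₁ ∨ v ∈ V₂) ∧
      (∃ e : V₁ ≃ Fin V₁.card,
        Semiacyclic (fun i j => R ((e.symm i : V)) ((e.symm j : V)))) ∧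
      (∃ e : V₂ ≃ Fin V₂.card,
        Semiacyclic (fun i j => R ((e.symm i : V)) ((e.symm j : V)))) := by
  refine ⟨({v | x v ≤ 1} : Finset V), ({v | 1 ≤ x v} : Finset V), fun v => ?_,
    exists_numbering_semiacyclic_of_le_one htour hcoin hrep _ fun v hv => (mem_filter.1 hv).2,
    exists_numbering_semiacyclic_of_one_le htour hcoin hrep _ fun v hv => (mem_filter.1 hv).2⟩
  simpa only [mem_filter, mem_univ, true_and] using le_total (x v) 1
end
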